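/- arXiv:1901.03565 — 3 statements merged into one kernel-verified Lean document; each statement's English description precedes it below -/
import Mathlib

section
/- (Fourier slice theorem) Let f : ℝ² → ℂ be integrable, let θ ∈ ℝ, and write θ⃗ = (cos θ, sin θ) and θ⃗^⊥ = (−sin θ, cos θ). Define the X-ray transform X_θ f : ℝ → ℂ by X_θ f(y) = ∫_ℝ f(y θ⃗ + t θ⃗^⊥) dt (which is defined for almost every y and is integrable, by Fubini's theorem and the rotation invariance of Lebesgue measure). Then for every ω ∈ ℝ, the one-dimensional Fourier transform of X_θ f at ω equals the two-dimensional Fourier transform of f evaluated at the point ω θ⃗: 𝓕₁{X_θ f}(ω) = 𝓕₂{f}(ω θ⃗). -/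
open MeasureTheory Real
open scoped RealInnerProductSpace

/-- Fourier slice theorem: the 1D Fourier transform of the X-ray
transform `X_θ f` at `ω` equals the 2D Fourier transform of `f` at `ω θ⃗`. -/
theorem stmt5 (f : EuclideanSpace ℝ (Fin 2) → ℂ) (hf : Integrable f)
    (θ : ℝ) (ω : ℝ) :
    FourierTransform.fourier
      (fun y : ℝ => ∫ t : ℝ,
        f (y • (WithLp.equiv 2 (Fin 2 → ℝ)).symm ![Real.cos θ, Real.sin θ] +
           t • (WithLp.equiv 2 (Fin 2 → ℝ)).symm ![-Real.sin θ, Real.cos θ])) ω =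
    FourierTransform.fourier f
      (ω • (WithLp.equiv 2 (Fin 2 → ℝ)).symm ![Real.cos θ, Real.sin θ]) := by
  set v : EuclideanSpace ℝ (Fin 2) :=
    (WithLp.equiv 2 (Fin 2 → ℝ)).symm ![Real.cos θ, Real.sin θ] with hv
  set w : EuclideanSpace ℝ (Fin 2) :=
    (WithLp.equiv 2 (Fin 2 → ℝ)).symm ![-Real.sin θ, Real.cos θ] with hw
  have hvv : (inner ℝ v (v) : ℝ) = 1 := by
    simp [hv, PiLp.inner_apply, Fin.sum_univ_two, RCLike.inner_apply, -inner_self_eq_norm_sq_to_K]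
    nlinarith [Real.sin_sq_add_cos_sq θ]
  have hwv : (inner ℝ w (v) : ℝ) = 0 := by
    simp [hv, hw, PiLp.inner_apply, Fin.sum_univ_two, RCLike.inner_apply]
    ring
  have hvw : (inner ℝ v (w) : ℝ) = 0 := by
    simp [hv, hw, PiLp.inner_apply, Fin.sum_univ_two, RCLike.inner_apply]
    ring
  have hww : (inner ℝ w (w) : ℝ) = 1 := by
    simp [hw, PiLp.inner_apply, Fin.sum_univ_two, RCLike.inner_apply, -inner_self_eq_norm_sq_to_K]
    nlinarith [Real.sin_sq_add_cos_sq θ]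
  have hon : Orthonormal ℝ ![v, w] := by
    rw [orthonormal_iff_ite]
    intro i j
    fin_cases i <;> fin_cases j <;>
      simp [hvv, hwv, hvw, hww, -inner_self_eq_norm_sq_to_K]
  have hsp : ⊤ ≤ Submodule.span ℝ (Set.range ![v, w]) :=
    (hon.linearIndependent.span_eq_top_of_card_eq_finrank (by simp)).ge
  set B : OrthonormalBasis (Fin 2) ℝ (EuclideanSpace ℝ (Fin 2)) :=
    OrthonormalBasis.mk hon hsp with hB
  set ME : (ℝ × ℝ) ≃ᵐ EuclideanSpace ℝ (Fin 2) :=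
    (((MeasurableEquiv.finTwoArrow : (Fin 2 → ℝ) ≃ᵐ (ℝ × ℝ))).symm).trans
      ((MeasurableEquiv.toLp 2 (Fin 2 → ℝ)).trans
        B.repr.symm.toHomeomorph.toMeasurableEquiv) with hMEdef
  have hME : MeasurePreserving ME volume volume :=
    B.measurePreserving_repr_symm.comp
      (((EuclideanSpace.volume_preserving_symm_measurableEquiv_toLp (Fin 2)).symm).comp
        ((MeasureTheory.volume_preserving_finTwoArrow ℝ).symm _))
  have hMEapp : ∀ p : ℝ × ℝ, ME p = p.1 • v + p.2 • w := by
    intro p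
    have : ME p = B.repr.symm ((WithLp.equiv 2 (Fin 2 → ℝ)).symm ![p.1, p.2]) := rfl
    rw [this, ← B.sum_repr_symm]
    simp [hB, Fin.sum_univ_two]
  have hinner : ∀ p : ℝ × ℝ, (inner ℝ (ME p) (ω • v) : ℝ) = p.1 * ω := by
    intro p
    rw [hMEapp p]
    simp [inner_add_left, inner_smul_left, inner_smul_right, hvv, hwv, -inner_self_eq_norm_sq_to_K]
    ring
  have hfME : Integrable (fun p : ℝ × ℝ => f (ME p)) volume :=
    (hME.integrable_comp_emb ME.measurableEmbedding).mpr hf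
  set L : (ℝ × ℝ) →ₗ[ℝ] ℝ →ₗ[ℝ] ℝ := (LinearMap.mul ℝ ℝ).comp (LinearMap.fst ℝ ℝ ℝ) with hL
  have hG : Integrable (fun p : ℝ × ℝ =>
      (Real.fourierChar (-(p.1 * ω)) : Circle) • f (ME p)) volume := by
    have := (VectorFourier.fourierIntegral_convergent_iff (μ := (volume : Measure (ℝ × ℝ)))
      (L := L) (f := fun p : ℝ × ℝ => f (ME p)) Real.continuous_fourierChar
      (by simp [hL]; exact (continuous_fst.comp continuous_fst).mul continuous_snd) ω).mpr hfME
    simpa [hL] using this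
  calc FourierTransform.fourier (fun y : ℝ => ∫ t : ℝ, f (y • v + t • w)) ω
      = ∫ y : ℝ, (Real.fourierChar (-(y * ω)) : Circle) • ∫ t : ℝ, f (y • v + t • w) := Real.fourier_real_eq _ _
    _ = ∫ y : ℝ, ∫ t : ℝ, (Real.fourierChar (-(y * ω)) : Circle) • f (ME (y, t)) := by
        congr 1; ext y
        simp only [hMEapp]
        simp only [Circle.smul_def, smul_eq_mul]
        rw [MeasureTheory.integral_const_mul]
    _ = ∫ p : ℝ × ℝ, (Real.fourierChar (-(p.1 * ω)) : Circle) • f (ME p) := by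
        exact (MeasureTheory.integral_prod _ hG).symm
    _ = ∫ p : ℝ × ℝ, (Real.fourierChar (-(inner ℝ (ME p) (ω • v) : ℝ)) : Circle) • f (ME p) := by
        congr 1; ext p; rw [hinner]
    _ = ∫ x : EuclideanSpace ℝ (Fin 2),
          (Real.fourierChar (-(inner ℝ x (ω • v) : ℝ)) : Circle) • f x :=
        hME.integral_comp ME.measurableEmbedding
          (fun x => (Real.fourierChar (-(inner ℝ x (ω • v) : ℝ)) : Circle) • f x)
    _ = FourierTransform.fourier f (ω • v) := rfl
end

section
/- (MAP equals MMSE for the Gaussian model / Wiener filter identity) Let H ∈ ℂ^{M×N}, σ > 0, and let C ∈ ℂ^{N×N} be a Hermitian positive-definite matrix. Then both Hᴴ H + σ² C⁻¹ and H C Hᴴ + σ² I are invertible, and the following matrix identity holds: (Hᴴ H + σ² C⁻¹)⁻¹ Hᴴ = C Hᴴ (H C Hᴴ + σ² I)⁻¹. Consequently, for every g ∈ ℂ^M the Tikhonov/MAP reconstruction (Hᴴ H + σ² C⁻¹)⁻¹ Hᴴ g coincides with the Wiener-filter/MMSE reconstruction C Hᴴ (H C Hᴴ + σ² I)⁻¹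 g. -/
open Matrix
open scoped ComplexOrder

lemma smul_posDef {n : ℕ} {X : Matrix (Fin n) (Fin n) ℂ} (hX : X.PosDef)
    {c : ℂ} (hc : 0 < c) : (c • X).PosDef := by
  refine ⟨?_, fun x hx => ?_⟩
  · have := hX.isHermitian
    unfold Matrix.IsHermitian at *
    rw [conjTranspose_smul, this]
    have : star c = c := by
      rw [Complex.star_def, Complex.conj_eq_iff_im]
      have := Complex.lt_def.mp hc
      simpa using this.2.symm
    rw [this]
  · simpa [Finsupp.mul_sum, mul_assoc, mul_left_comm] using mul_pos hc (hX.2 hx)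

/-- MAP equals MMSE / Wiener filter identity: for Hermitian
positive-definite `C` and `σ > 0`, both `Hᴴ H + σ² C⁻¹` and `H C Hᴴ + σ² I` are
invertible and `(Hᴴ H + σ² C⁻¹)⁻¹ Hᴴ = C Hᴴ (H C Hᴴ + σ² I)⁻¹`; consequently the
MAP and Wiener/MMSE reconstructions coincide for every `g`. -/
theorem stmt12 (M N : ℕ) (H : Matrix (Fin M) (Fin N) ℂ)
    (σ : ℝ) (hσ : 0 < σ) (C : Matrix (Fin N) (Fin N) ℂ) (hC : C.PosDef) :
    IsUnit (Hᴴ * H + ((σ : ℂ) ^ 2) • C⁻¹) ∧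
    IsUnit (H * C * Hᴴ + ((σ : ℂ) ^ 2) • (1 : Matrix (Fin M) (Fin M) ℂ)) ∧
    (Hᴴ * H + ((σ : ℂ) ^ 2) • C⁻¹)⁻¹ * Hᴴ =
      C * Hᴴ * (H * C * Hᴴ + ((σ : ℂ) ^ 2) • (1 : Matrix (Fin M) (Fin M) ℂ))⁻¹ ∧
    ∀ g : Fin M → ℂ,
      ((Hᴴ * H + ((σ : ℂ) ^ 2) • C⁻¹)⁻¹).mulVec (Hᴴ.mulVec g) =
        (C * Hᴴ).mulVec
          (((H * C * Hᴴ + ((σ : ℂ) ^ 2) • (1 : Matrix (Fin M) (Fin M) ℂ))⁻¹).mulVec g) := by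
  have hσ2 : (0 : ℂ) < (σ : ℂ) ^ 2 := by
    rw [← Complex.ofReal_pow]
    exact_mod_cast pow_pos hσ 2
  set A := Hᴴ * H + ((σ : ℂ) ^ 2) • C⁻¹ with hA
  set B := H * C * Hᴴ + ((σ : ℂ) ^ 2) • (1 : Matrix (Fin M) (Fin M) ℂ) with hB
  have hApd : A.PosDef :=
    Matrix.PosDef.posSemidef_add (posSemidef_conjTranspose_mul_self H) (smul_posDef hC.inv hσ2)
  have hBpd : B.PosDef := by
    have h1 : (H * C * Hᴴ).PosSemidef := by
      have := hC.posSemidef.mul_mul_conjTranspose_same H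
      simpa [Matrix.mul_assoc] using this
    exact Matrix.PosDef.posSemidef_add h1 (smul_posDef Matrix.PosDef.one hσ2)
  have hAu : IsUnit A := hApd.isUnit
  have hBu : IsUnit B := hBpd.isUnit
  have key : A * (C * Hᴴ) = Hᴴ * B := by
    rw [hA, hB, Matrix.add_mul, Matrix.mul_add]
    congr 1
    · simp [Matrix.mul_assoc]
    · rw [Matrix.smul_mul, Matrix.mul_smul, Matrix.mul_one, ← Matrix.mul_assoc,
        Matrix.nonsing_inv_mul C (C.isUnit_iff_isUnit_det.mp hC.isUnit), Matrix.one_mul]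
  have main : A⁻¹ * Hᴴ = C * Hᴴ * B⁻¹ := by
    have hAdet : IsUnit A.det := A.isUnit_iff_isUnit_det.mp hAu
    have hBdet : IsUnit B.det := B.isUnit_iff_isUnit_det.mp hBu
    calc A⁻¹ * Hᴴ = A⁻¹ * Hᴴ * (B * B⁻¹) := by
          rw [Matrix.mul_nonsing_inv B hBdet, Matrix.mul_one]
      _ = A⁻¹ * (Hᴴ * B) * B⁻¹ := by simp only [Matrix.mul_assoc]
      _ = A⁻¹ * (A * (C * Hᴴ)) * B⁻¹ := by rw [key]
      _ = C * Hᴴ * B⁻¹ := by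
          rw [← Matrix.mul_assoc, ← Matrix.mul_assoc, Matrix.nonsing_inv_mul A hAdet,
            Matrix.one_mul, Matrix.mul_assoc]
  refine ⟨hAu, hBu, main, fun g => ?_⟩
  rw [Matrix.mulVec_mulVec, main, ← Matrix.mulVec_mulVec]
end

section
/- (Representer theorem for ℓ₁-constrained minimization) Let H ∈ ℝ^{M×N}, g ∈ ℝ^M, and σ ≥ 0, and suppose the feasible set { f ∈ ℝ^N : ‖H f − g‖₂² ≤ σ² } is nonempty. Consider the solution set 𝒱 = argmin { ‖f‖₁ : ‖H f − g‖₂² ≤ σ² }. Then 𝒱 is nonempty, convex, and compact, and every extreme point f̃ of 𝒱 is sparse with at most M nonzero entries: f̃ = Σ_{k=1}^{K} a_k e_{n_k} for some K ≤ M, coefficients a ∈ ℝ^K, and indices n_k ∈ {1, …, N}, where {e_n} is the standard basis of ℝ^N. -/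
open Matrix

private lemma abs_helper (a x : ℝ) (h : |x| ≤ |a|) : |a + x| + |a - x| = 2 * |a| := by
  rcases le_total 0 a with ha | ha
  · rw [abs_of_nonneg ha] at h
    rw [abs_of_nonneg ha, abs_of_nonneg, abs_of_nonneg] <;>
      [ring; linarith [abs_le.mp h]; linarith [abs_le.mp h]]
  · rw [abs_of_nonpos ha] at h
    rw [abs_of_nonpos ha, abs_of_nonpos, abs_of_nonpos] <;>
      [ring; linarith [abs_le.mp h]; linarith [abs_le.mp h]]

/-- Representer theorem for ℓ₁-constrained minimization: the solution
set `𝒱` of `min ‖f‖₁ s.t. ‖H f − g‖₂² ≤ σ²` is nonempty, convex, and compact, and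
every extreme point of `𝒱` is a combination of at most `M` standard basis vectors. -/
theorem stmt14 (M N : ℕ) (H : Matrix (Fin M) (Fin N) ℝ) (g : Fin M → ℝ)
    (σ : ℝ) (hσ : 0 ≤ σ)
    (hfeas : {f : Fin N → ℝ |
      ‖(WithLp.equiv 2 (Fin M → ℝ)).symm (H.mulVec f - g)‖ ^ 2 ≤ σ ^ 2}.Nonempty)
    (V : Set (Fin N → ℝ))
    (hV : V = {f : Fin N → ℝ |
      (‖(WithLp.equiv 2 (Fin M → ℝ)).symm (H.mulVec f - g)‖ ^ 2 ≤ σ ^ 2) ∧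
      ∀ f' : Fin N → ℝ,
        ‖(WithLp.equiv 2 (Fin M → ℝ)).symm (H.mulVec f' - g)‖ ^ 2 ≤ σ ^ 2 →
          ∑ n, |f n| ≤ ∑ n, |f' n|}) :
    V.Nonempty ∧ Convex ℝ V ∧ IsCompact V ∧
    ∀ ftilde ∈ Set.extremePoints ℝ V,
      ∃ (K : ℕ), K ≤ M ∧ ∃ (a : Fin K → ℝ) (n : Fin K → Fin N),
        ftilde = ∑ k, a k • (Pi.single (n k) (1 : ℝ) : Fin N → ℝ) := by
  classical
  set E := (WithLp.equiv 2 (Fin M → ℝ)).symm with hE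
  -- norm condition: squared form iff linear form
  have hnorm : ∀ y : Fin M → ℝ, ‖E y‖ ^ 2 ≤ σ ^ 2 ↔ ‖E y‖ ≤ σ := by
    intro y
    constructor
    · exact fun h => le_of_pow_le_pow_left₀ two_ne_zero hσ h
    · exact fun h => pow_le_pow_left₀ (norm_nonneg _) h 2
  -- continuity of the constraint function
  have hcont : Continuous fun f : Fin N → ℝ => ‖E (H.mulVec f - g)‖ := by
    set L : (Fin N → ℝ) →ₗ[ℝ] PiLp 2 (fun _ : Fin M => ℝ) :=
      (WithLp.linearEquiv 2 ℝ (Fin M → ℝ)).symm.toLinearMap ∘ₗ H.mulVecLin with hL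
    have : (fun f : Fin N → ℝ => ‖E (H.mulVec f - g)‖) = fun f => ‖L f - E g‖ := rfl
    rw [this]
    exact (L.continuous_of_finiteDimensional.sub continuous_const).norm
  -- continuity of the ℓ¹ norm
  have φcont : Continuous fun f : Fin N → ℝ => ∑ n, |f n| :=
    continuous_finset_sum _ fun n _ => (continuous_apply n).abs
  -- feasible set convexity
  have hCconv : ∀ f f' : Fin N → ℝ, ‖E (H.mulVec f - g)‖ ^ 2 ≤ σ ^ 2 →
      ‖E (H.mulVec f' - g)‖ ^ 2 ≤ σ ^ 2 → ∀ t s : ℝ, 0 ≤ t → 0 ≤ s → t + s = 1 →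
      ‖E (H.mulVec (t • f + s • f') - g)‖ ^ 2 ≤ σ ^ 2 := by
    intro f f' hf hf' t s ht hs hts
    rw [hnorm] at hf hf' ⊢
    have hvec : H.mulVec (t • f + s • f') - g =
        t • (H.mulVec f - g) + s • (H.mulVec f' - g) := by
      rw [mulVec_add, mulVec_smul, mulVec_smul]
      have hg : (g : Fin M → ℝ) = (t + s) • g := by rw [hts, one_smul]
      calc t • H.mulVec f + s • H.mulVec f' - g
          = t • H.mulVec f + s • H.mulVec f' - (t + s) • g := by rw [← hg]
        _ = t • (H.mulVec f - g) + s • (H.mulVec f' - g) := by module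
    have hEeq : E (H.mulVec (t • f + s • f') - g) =
        t • E (H.mulVec f - g) + s • E (H.mulVec f' - g) := by rw [hvec]; rfl
    calc ‖E (H.mulVec (t • f + s • f') - g)‖
        ≤ t * ‖E (H.mulVec f - g)‖ + s * ‖E (H.mulVec f' - g)‖ := by
          rw [hEeq]
          refine (norm_add_le _ _).trans ?_
          rw [norm_smul, norm_smul, Real.norm_eq_abs, Real.norm_eq_abs,
            abs_of_nonneg ht, abs_of_nonneg hs]
      _ ≤ t * σ + s * σ := by
          gcongr
      _ = σ := by rw [← add_mul, hts, one_mul]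
  -- feasible set is closed
  have hCclosed : IsClosed {f : Fin N → ℝ | ‖E (H.mulVec f - g)‖ ^ 2 ≤ σ ^ 2} := by
    have : {f : Fin N → ℝ | ‖E (H.mulVec f - g)‖ ^ 2 ≤ σ ^ 2} =
        (fun f => ‖E (H.mulVec f - g)‖) ⁻¹' Set.Iic σ := by
      ext f; exact hnorm _
    rw [this]
    exact IsClosed.preimage hcont isClosed_Iic
  -- existence of a minimizer
  obtain ⟨f₀, hf₀⟩ := hfeas
  have hbdd : ∀ r : ℝ, Bornology.IsBounded {f : Fin N → ℝ | ∑ n, |f n| ≤ r} := by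
    intro r
    rcases le_or_gt 0 r with hr | hr
    · rw [isBounded_iff_forall_norm_le]
      refine ⟨r, fun f hf => ?_⟩
      rw [pi_norm_le_iff_of_nonneg hr]
      intro i
      rw [Real.norm_eq_abs]
      exact le_trans (Finset.single_le_sum (fun n _ => abs_nonneg (f n))
        (Finset.mem_univ i)) hf
    · convert Bornology.isBounded_empty (α := Fin N → ℝ)
      rw [Set.eq_empty_iff_forall_notMem]
      intro f hf
      have : (0:ℝ) ≤ ∑ n, |f n| := Finset.sum_nonneg fun n _ => abs_nonneg _
      simp only [Set.mem_setOf_eq] at hf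
      linarith
  have hK0compact : IsCompact ({f : Fin N → ℝ | ‖E (H.mulVec f - g)‖ ^ 2 ≤ σ ^ 2} ∩
      {f | ∑ n, |f n| ≤ ∑ n, |f₀ n|}) := by
    apply Metric.isCompact_of_isClosed_isBounded
    · exact hCclosed.inter (isClosed_le φcont continuous_const)
    · exact (hbdd _).subset Set.inter_subset_right
  obtain ⟨fstar, hfstarK, hmin⟩ := hK0compact.exists_isMinOn
    ⟨f₀, hf₀, show (∑ n, |f₀ n|) ≤ ∑ n, |f₀ n| from le_rfl⟩ φcont.continuousOn
  have hfstarV : fstar ∈ V := by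
    rw [hV]
    refine ⟨hfstarK.1, fun f' hf' => ?_⟩
    rcases le_or_gt (∑ n, |f' n|) (∑ n, |f₀ n|) with hle | hlt
    · exact hmin ⟨hf', hle⟩
    · exact le_trans (hmin ⟨hf₀, show (∑ n, |f₀ n|) ≤ ∑ n, |f₀ n| from le_rfl⟩) hlt.le
  have hVne : V.Nonempty := ⟨fstar, hfstarV⟩
  -- convexity of V
  have hVconv : Convex ℝ V := by
    rw [hV]
    intro f hf f' hf' t s ht hs hts
    simp only [Set.mem_setOf_eq] at hf hf' ⊢
    refine ⟨hCconv f f' hf.1 hf'.1 t s ht hs hts, fun f'' hf'' => ?_⟩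
    have key : ∑ n, |(t • f + s • f') n| ≤ t * (∑ n, |f n|) + s * (∑ n, |f' n|) := by
      rw [Finset.mul_sum, Finset.mul_sum, ← Finset.sum_add_distrib]
      refine Finset.sum_le_sum fun n _ => ?_
      simp only [Pi.add_apply, Pi.smul_apply, smul_eq_mul]
      calc |t * f n + s * f' n| ≤ |t * f n| + |s * f' n| := abs_add_le _ _
        _ = t * |f n| + s * |f' n| := by
            rw [abs_mul, abs_mul, abs_of_nonneg ht, abs_of_nonneg hs]
    refine key.trans ?_
    have h1 := mul_le_mul_of_nonneg_left (hf.2 f'' hf'') ht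
    have h2 := mul_le_mul_of_nonneg_left (hf'.2 f'' hf'') hs
    have h3 : t * (∑ n, |f'' n|) + s * (∑ n, |f'' n|) = ∑ n, |f'' n| := by
      rw [← add_mul, hts, one_mul]
    linarith
  -- compactness of V
  have hVclosed : IsClosed V := by
    have : V = {f : Fin N → ℝ | ‖E (H.mulVec f - g)‖ ^ 2 ≤ σ ^ 2} ∩
        ⋂ f' : Fin N → ℝ, ⋂ _ : ‖E (H.mulVec f' - g)‖ ^ 2 ≤ σ ^ 2,
          {f | ∑ n, |f n| ≤ ∑ n, |f' n|} := by
      rw [hV]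
      ext f
      simp only [Set.mem_setOf_eq, Set.mem_inter_iff, Set.mem_iInter]
    rw [this]
    exact hCclosed.inter (isClosed_iInter fun f' => isClosed_iInter fun _ =>
      isClosed_le φcont continuous_const)
  have hVcompact : IsCompact V := by
    apply Metric.isCompact_of_isClosed_isBounded hVclosed
    apply (hbdd (∑ n, |f₀ n|)).subset
    intro f hf
    rw [hV] at hf
    exact hf.2 f₀ hf₀
  refine ⟨hVne, hVconv, hVcompact, ?_⟩
  -- extreme points are sparse
  intro ftilde hft
  obtain ⟨hftV, hext⟩ := mem_extremePoints.mp hft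
  rw [hV] at hftV
  obtain ⟨hftfeas, hftmin⟩ := hftV
  set S : Finset (Fin N) := Finset.univ.filter (fun n => ftilde n ≠ 0) with hSdef
  have hcard : S.card ≤ M := by
    by_contra h'
    push_neg at h'
    -- columns indexed by S are linearly dependent
    have hdep : ¬ LinearIndependent ℝ (fun x : {x // x ∈ S} => fun i => H i x.1) := by
      intro hli
      have := hli.fintype_card_le_finrank
      rw [Module.finrank_fin_fun, Fintype.card_coe] at this
      omega
    obtain ⟨c, hcsum, x₀, hx₀⟩ := Fintype.not_linearIndependent_iff.mp hdep
    set h : Fin N → ℝ := fun n => if hn : n ∈ S then c ⟨n, hn⟩ else 0 with hhdef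
    have hhx₀ : h x₀.1 ≠ 0 := by
      have : h x₀.1 = c x₀ := by rw [hhdef]; simp [dif_pos x₀.2]
      rw [this]; exact hx₀
    have hhsupp : ∀ n, n ∉ S → h n = 0 := fun n hn => dif_neg hn
    have Hh : H.mulVec h = 0 := by
      funext i
      have step1 : H.mulVec h i = ∑ n, H i n * h n := by
        simp [Matrix.mulVec, dotProduct]
      have step2 : ∑ n, H i n * h n = ∑ n ∈ S, H i n * h n := by
        refine (Finset.sum_subset (Finset.subset_univ S) ?_).symm
        intro n _ hn
        rw [hhsupp n hn, mul_zero]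
      have step3 : ∑ n ∈ S, H i n * h n = ∑ x : {x // x ∈ S}, c x * H i x.1 := by
        rw [← Finset.sum_coe_sort S (fun n => H i n * h n)]
        refine Finset.sum_congr rfl fun x _ => ?_
        have : h x.1 = c x := by rw [hhdef]; simp [dif_pos x.2]
        rw [this, mul_comm]
      have step4 : ∑ x : {x // x ∈ S}, c x * H i x.1 =
          (∑ x : {x // x ∈ S}, c x • fun i' => H i' x.1) i := by
        rw [Finset.sum_apply]
        rfl
      rw [step1, step2, step3, step4, hcsum]
    -- choose ε small enough
    have hS' : S.Nonempty := ⟨x₀.1, x₀.2⟩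
    set δ : ℝ := S.inf' hS' fun n => |ftilde n| with hδdef
    have hδ : 0 < δ := by
      rw [hδdef, Finset.lt_inf'_iff]
      intro n hn
      have : ftilde n ≠ 0 := (Finset.mem_filter.mp hn).2
      exact abs_pos.mpr this
    set B : ℝ := S.sup' hS' fun n => |h n| with hBdef
    have hB : 0 ≤ B := le_trans (abs_nonneg (h x₀.1)) (Finset.le_sup' (fun n => |h n|) x₀.2)
    set ε : ℝ := δ / (B + 1) with hεdef
    have hε : 0 < ε := div_pos hδ (by linarith)
    -- key pointwise identity
    have key : ∀ n, |ftilde n + ε * h n| + |ftilde n - ε * h n| = 2 * |ftilde n| := by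
      intro n
      by_cases hn : n ∈ S
      · apply abs_helper
        have h1 : |ε * h n| = ε * |h n| := by rw [abs_mul, abs_of_pos hε]
        have h2 : |h n| ≤ B := Finset.le_sup' (fun n => |h n|) hn
        have h3 : ε * |h n| ≤ ε * B := by
          exact mul_le_mul_of_nonneg_left h2 hε.le
        have h4 : ε * B ≤ δ := by
          rw [hεdef, div_mul_eq_mul_div, div_le_iff₀ (by linarith : (0:ℝ) < B + 1)]
          nlinarith
        have h5 : δ ≤ |ftilde n| := Finset.inf'_le _ hn
        rw [h1]; linarith
      · rw [hhsupp n hn]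
        simp [two_mul]
    have sumAB : (∑ n, |(ftilde + ε • h) n|) + (∑ n, |(ftilde - ε • h) n|) =
        2 * ∑ n, |ftilde n| := by
      rw [← Finset.sum_add_distrib, Finset.mul_sum]
      refine Finset.sum_congr rfl fun n _ => ?_
      simpa [smul_eq_mul] using key n
    -- both perturbations feasible
    have mulvA : H.mulVec (ftilde + ε • h) = H.mulVec ftilde := by
      rw [mulVec_add, mulVec_smul, Hh, smul_zero, add_zero]
    have mulvB : H.mulVec (ftilde - ε • h) = H.mulVec ftilde := by
      rw [sub_eq_add_neg, mulVec_add, ← smul_neg, mulVec_smul]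
      rw [Matrix.mulVec_neg, Hh]
      simp
    have feasA : ‖E (H.mulVec (ftilde + ε • h) - g)‖ ^ 2 ≤ σ ^ 2 := by
      rw [mulvA]; exact hftfeas
    have feasB : ‖E (H.mulVec (ftilde - ε • h) - g)‖ ^ 2 ≤ σ ^ 2 := by
      rw [mulvB]; exact hftfeas
    have minA := hftmin _ feasA
    have minB := hftmin _ feasB
    have eqA : ∑ n, |(ftilde + ε • h) n| = ∑ n, |ftilde n| := by linarith
    have eqB : ∑ n, |(ftilde - ε • h) n| = ∑ n, |ftilde n| := by linarith
    have hAV : ftilde + ε • h ∈ V := by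
      rw [hV]
      exact ⟨feasA, fun f' hf' => eqA ▸ hftmin f' hf'⟩
    have hBV : ftilde - ε • h ∈ V := by
      rw [hV]
      exact ⟨feasB, fun f' hf' => eqB ▸ hftmin f' hf'⟩
    have hseg : ftilde ∈ openSegment ℝ (ftilde + ε • h) (ftilde - ε • h) := by
      refine ⟨1/2, 1/2, by norm_num, by norm_num, by norm_num, ?_⟩
      module
    have := (hext _ hAV _ hBV hseg).1
    have hεh : ε • h = 0 := by
      have : ftilde + ε • h = ftilde + 0 := by rw [add_zero]; exact this
      exact add_left_cancel this
    have : h x₀.1 = 0 := by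
      have := congrFun hεh x₀.1
      simp only [Pi.smul_apply, smul_eq_mul, Pi.zero_apply] at this
      rcases mul_eq_zero.mp this with h1 | h1
      · exact absurd h1 hε.ne'
      · exact h1
    exact hhx₀ this
  -- build the representation
  refine ⟨S.card, hcard, fun k => ftilde ((S.equivFin.symm k).1),
    fun k => (S.equivFin.symm k).1, ?_⟩
  have h1 : ∑ k : Fin S.card,
      ftilde ((S.equivFin.symm k).1) • (Pi.single ((S.equivFin.symm k).1) (1:ℝ) : Fin N → ℝ) =
      ∑ x : {x // x ∈ S}, ftilde x.1 • (Pi.single x.1 (1:ℝ) : Fin N → ℝ) :=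
    Equiv.sum_comp S.equivFin.symm (fun x => ftilde x.1 • (Pi.single x.1 (1:ℝ) : Fin N → ℝ))
  rw [h1, Finset.sum_coe_sort S (fun x => ftilde x • (Pi.single x (1:ℝ) : Fin N → ℝ))]
  have h2 : ∑ x ∈ S, ftilde x • (Pi.single x (1:ℝ) : Fin N → ℝ) =
      ∑ x, ftilde x • (Pi.single x (1:ℝ) : Fin N → ℝ) := by
    refine Finset.sum_subset (Finset.subset_univ S) fun x _ hx => ?_
    have : ftilde x = 0 := by
      by_contra hne
      exact hx (Finset.mem_filter.mpr ⟨Finset.mem_univ x, hne⟩)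
    rw [this, zero_smul]
  rw [h2]
  have h3 : ∀ x : Fin N, ftilde x • (Pi.single x (1:ℝ) : Fin N → ℝ) =
      Pi.single x (ftilde x) := by
    intro x
    rw [← Pi.single_smul, smul_eq_mul, mul_one]
  simp_rw [h3]
  exact (Finset.univ_sum_single ftilde).symm
end
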